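/- Let t be an order-decreasing partial function on {1,…,n} with domain X = dom t. Call t irreducible if t is not the identity map of X and whenever t = h ∘ s with s, h order-decreasing partial functions on {1,…,n} satisfying dom s = dom t and dom h = im s, either s is the identity map of its domain or h is the identity map of its domain. Then t is irreducible if and only if there exists j ∈ X such that t(i) = i for every i ∈ X with i ≠ j, t(j) < j, and j⁻_X ≤ t(j), where j⁻_X denotes the maximum of {x ∈ {1,…,n} : x ∉ X and x < j} if this set is nonempty, and j⁻_X = 1 otherwise. -/
import Mathlib


/-- The monoid of partial functions on `{1,…,n}`, modeled as `Fin n → Option (Fin n)`,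
under composition of partial functions (right to left). -/
abbrev PT (n : ℕ) := Fin n → Option (Fin n)

namespace PT

variable {n : ℕ}

/-- Composition of partial functions, right to left: `comp s t = s ∘ t`. -/
def comp (s t : PT n) : PT n := fun x => (t x).bind s

/-- The domain of a partial function. -/
def dom (t : PT n) : Finset (Fin n) := Finset.univ.filter fun x => (t x).isSome

/-- The image (range) of a partial function. -/
def ran (t : PT n) : Finset (Fin n) := Finset.univ.filter fun y => ∃ x, t x = some y

/-- The identity partial function on the subset `X`. -/
def idOn (X : Finset (Fin n)) : PT n := fun x => if x ∈ X then some x else none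

instance : Monoid (PT n) where
  mul := comp
  one := fun x => some x
  mul_assoc s t w := by
    funext x
    show (w x).bind (fun z => (t z).bind s) = ((w x).bind t).bind s
    exact (Option.bind_assoc (w x) t s).symm
  one_mul t := by
    funext x
    show (t x).bind (fun y => some y) = t x
    cases t x <;> rfl
  mul_one t := by
    funext x
    show (some x).bind t = t x
    rfl

end PT

namespace PT

/-- A partial function is order-decreasing if `t x ≤ x` for all `x` in its domain. -/
def OrderDecreasing (t : PT n) : Prop := ∀ x y, t x = some y → y ≤ x

/-- `jminus X j` is the maximum of `{x : x ∉ X, x < j}` if this set is nonempty,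
and the least element `1` (modeled as `⟨0, _⟩ : Fin n`) otherwise. -/
def jminus {n : ℕ} (X : Finset (Fin n)) (j : Fin n) : Fin n :=
  if h : (Finset.univ.filter fun x => x ∉ X ∧ x < j).Nonempty then
    (Finset.univ.filter fun x => x ∉ X ∧ x < j).max' h
  else ⟨0, j.pos⟩

/-- `t` is irreducible (as a morphism of the category `EF_n` of order-decreasing partial
surjections): it is not the identity of its domain, and in any factorization `t = h ∘ s`
through order-decreasing partial functions with `dom s = dom t` and `dom h = im s`,
one of `s`, `h` is the identity of its domain. -/
def IrreducibleOD (t : PT n) : Prop :=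
  t ≠ idOn (dom t) ∧
    ∀ s h : PT n, OrderDecreasing s → OrderDecreasing h →
      dom s = dom t → dom h = ran s → t = comp h s →
      s = idOn (dom s) ∨ h = idOn (dom h)

end PT

namespace PT

variable {n : ℕ}

lemma mem_dom_iff {t : PT n} {x : Fin n} : x ∈ dom t ↔ (t x).isSome := by
  simp [dom]

lemma apply_eq_none {t : PT n} {x : Fin n} (hx : x ∉ dom t) : t x = none := by
  rw [mem_dom_iff] at hx
  exact Option.not_isSome_iff_eq_none.mp hx

lemma mem_dom_of_eq_some {t : PT n} {x y : Fin n} (h : t x = some y) : x ∈ dom t := by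
  rw [mem_dom_iff, h]; rfl

lemma mem_ran_iff {t : PT n} {y : Fin n} : y ∈ ran t ↔ ∃ x, t x = some y := by
  simp [ran]

lemma eq_idOn_dom_iff {s : PT n} : s = idOn (dom s) ↔ ∀ x ∈ dom s, s x = some x := by
  constructor
  · intro h x hx
    conv_lhs => rw [h]
    simp [idOn, hx]
  · intro h
    funext x
    by_cases hx : x ∈ dom s
    · rw [h x hx]; simp [idOn, hx]
    · rw [apply_eq_none hx]; simp [idOn, hx]

lemma le_jminus {X : Finset (Fin n)} {j w : Fin n} (hw : w ∉ X) (hwj : w < j) :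
    w ≤ jminus X j := by
  have hne : (Finset.univ.filter fun x => x ∉ X ∧ x < j).Nonempty :=
    ⟨w, by simp [hw, hwj]⟩
  rw [jminus, dif_pos hne]
  exact Finset.le_max' _ w (by simp [hw, hwj])

end PT

open PT in
/-- An order-decreasing partial function `t` on `{1,…,n}` with domain
`X = dom t` is irreducible if and only if there is `j ∈ X` with `t i = i` for all
`i ∈ X \ {j}`, `t j < j` and `j⁻_X ≤ t j`. -/
theorem irreducible_orderDecreasing_iff (n : ℕ) (t : PT n) (ht : OrderDecreasing t) :
    IrreducibleOD t ↔
      ∃ j ∈ dom t, (∀ i ∈ dom t, i ≠ j → t i = some i) ∧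
        ∃ y, t j = some y ∧ y < j ∧ jminus (dom t) j ≤ y := by
  constructor
  · rintro ⟨hne, hfac⟩
    set M := (dom t).filter (fun x => t x ≠ some x) with hMdef
    have hMne : M.Nonempty := by
      by_contra hMe
      rw [Finset.not_nonempty_iff_eq_empty] at hMe
      apply hne
      rw [eq_idOn_dom_iff]
      intro x hx
      by_contra hxx
      have : x ∈ M := Finset.mem_filter.mpr ⟨hx, hxx⟩
      rw [hMe] at this
      simp at this
    set j := M.max' hMne with hjdef
    have hjM : j ∈ M := M.max'_mem hMne
    have hjX : j ∈ dom t := (Finset.mem_filter.mp hjM).1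
    have hjne : t j ≠ some j := (Finset.mem_filter.mp hjM).2
    obtain ⟨y, hty⟩ := Option.isSome_iff_exists.mp (mem_dom_iff.mp hjX)
    have hyj : y < j :=
      lt_of_le_of_ne (ht j y hty) (fun hyj => hjne (by rw [hty, hyj]))
    have hmax : ∀ x ∈ M, x ≤ j := fun x hx => M.le_max' x hx
    by_cases hone : ∀ i ∈ dom t, i ≠ j → t i = some i
    · by_cases hle : jminus (dom t) j ≤ y
      · exact ⟨j, hjX, hone, y, hty, hyj, hle⟩
      · exfalso
        push_neg at hle
        have hSne : (Finset.univ.filter fun x => x ∉ dom t ∧ x < j).Nonempty := by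
          by_contra hS
          rw [jminus, dif_neg hS] at hle
          exact absurd hle (by simp [Fin.lt_def])
        set m := (Finset.univ.filter fun x => x ∉ dom t ∧ x < j).max' hSne with hmdef
        have hmprop : m ∉ dom t ∧ m < j := by
          have := Finset.max'_mem _ hSne
          exact (Finset.mem_filter.mp this).2
        have hym : y < m := by rwa [jminus, dif_pos hSne] at hle
        set s : PT n := fun x => if x = j then some m else t x with hsdef
        set h : PT n := fun z => if z = m then some y
          else if z ∈ ran s then some z else none with hhdef
        have hds : dom s = dom t := by
          ext x
          simp only [mem_dom_iff]
          by_cases hxj : x = j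
          · subst hxj
            simp only [hsdef, if_pos rfl, Option.isSome_some, true_iff]
            exact mem_dom_iff.mp hjX
          · simp [hsdef, hxj]
        have hmran : m ∈ ran s := mem_ran_iff.mpr ⟨j, by simp [hsdef]⟩
        have hdh : dom h = ran s := by
          ext z
          simp only [mem_dom_iff]
          by_cases hzm : z = m
          · subst hzm
            simp [hhdef, hmran]
          · by_cases hzr : z ∈ ran s <;> simp [hhdef, hzm, hzr]
        have hsOD : OrderDecreasing s := by
          intro x z hz
          by_cases hxj : x = j
          · subst hxj
            simp only [hsdef, if_pos rfl, Option.some_inj] at hz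
            subst hz
            exact le_of_lt hmprop.2
          · simp only [hsdef, if_neg hxj] at hz
            exact ht x z hz
        have hhOD : OrderDecreasing h := by
          intro z w hw
          by_cases hzm : z = m
          · subst hzm
            simp only [hhdef, if_pos rfl, Option.some_inj] at hw
            subst hw
            exact le_of_lt hym
          · simp only [hhdef, if_neg hzm] at hw
            by_cases hzr : z ∈ ran s
            · rw [if_pos hzr] at hw
              rw [Option.some_inj] at hw
              subst hw
              exact le_refl _
            · rw [if_neg hzr] at hw
              exact absurd hw (by simp)
        have hcomp : t = comp h s := by
          funext x
          show t x = (s x).bind h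
          by_cases hxj : x = j
          · subst hxj
            simp [hsdef, hhdef, hty]
          · simp only [hsdef, if_neg hxj]
            cases htx : t x with
            | none => rfl
            | some z =>
              have hxX : x ∈ dom t := mem_dom_of_eq_some htx
              have hzx : z = x := by
                have := hone x hxX hxj
                rw [htx] at this
                exact Option.some_inj.mp this
              subst hzx
              have hzm : z ≠ m := fun hzm => hmprop.1 (hzm ▸ hxX)
              have hzr : z ∈ ran s := mem_ran_iff.mpr ⟨z, by simp [hsdef, hxj, htx]⟩
              simp [hhdef, hzm, hzr]
        rcases hfac s h hsOD hhOD hds hdh hcomp with hc | hc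
        · rw [eq_idOn_dom_iff] at hc
          have := hc j (hds ▸ hjX)
          simp only [hsdef, if_pos rfl, Option.some_inj] at this
          exact absurd this (ne_of_lt hmprop.2)
        · rw [eq_idOn_dom_iff] at hc
          have := hc m (hdh ▸ hmran)
          simp only [hhdef, if_pos rfl, Option.some_inj] at this
          exact absurd this (ne_of_lt hym)
    · exfalso
      push_neg at hone
      obtain ⟨j2, hj2X, hj2ne, hj2m⟩ := hone
      set s : PT n := fun x => if x = j then some j else t x with hsdef
      set h : PT n := fun z => if z = j then some y
        else if z ∈ ran s then some z else none with hhdef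
      have hds : dom s = dom t := by
        ext x
        simp only [mem_dom_iff]
        by_cases hxj : x = j
        · subst hxj
          simp only [hsdef, if_pos rfl, Option.isSome_some, true_iff]
          exact mem_dom_iff.mp hjX
        · simp [hsdef, hxj]
      have hjran : j ∈ ran s := mem_ran_iff.mpr ⟨j, by simp [hsdef]⟩
      have hdh : dom h = ran s := by
        ext z
        simp only [mem_dom_iff]
        by_cases hzj : z = j
        · subst hzj
          simp [hhdef, hjran]
        · by_cases hzr : z ∈ ran s <;> simp [hhdef, hzj, hzr]
      have hsOD : OrderDecreasing s := by
        intro x z hz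
        by_cases hxj : x = j
        · subst hxj
          simp only [hsdef, if_pos rfl, Option.some_inj] at hz
          subst hz
          exact le_refl _
        · simp only [hsdef, if_neg hxj] at hz
          exact ht x z hz
      have hhOD : OrderDecreasing h := by
        intro z w hw
        by_cases hzj : z = j
        · subst hzj
          simp only [hhdef, if_pos rfl, Option.some_inj] at hw
          subst hw
          exact le_of_lt hyj
        · simp only [hhdef, if_neg hzj] at hw
          by_cases hzr : z ∈ ran s
          · rw [if_pos hzr] at hw
            rw [Option.some_inj] at hw
            subst hw
            exact le_refl _
          · rw [if_neg hzr] at hw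
            exact absurd hw (by simp)
      have hkey : ∀ x z, x ≠ j → t x = some z → z ≠ j := by
        intro x z hxj htx hzj
        subst hzj
        have hjx : j ≤ x := ht x j htx
        have hxX : x ∈ dom t := mem_dom_of_eq_some htx
        by_cases hxM : x ∈ M
        · exact hxj (le_antisymm (hmax x hxM) hjx)
        · have htxx : t x = some x := by
            by_contra hc
            exact hxM (Finset.mem_filter.mpr ⟨hxX, hc⟩)
          rw [htx] at htxx
          exact hxj (Option.some_inj.mp htxx).symm
      have hcomp : t = comp h s := by
        funext x
        show t x = (s x).bind h
        by_cases hxj : x = j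
        · subst hxj
          simp [hsdef, hhdef, hty]
        · simp only [hsdef, if_neg hxj]
          cases htx : t x with
          | none => rfl
          | some z =>
            have hzj := hkey x z hxj htx
            have hzr : z ∈ ran s := mem_ran_iff.mpr ⟨x, by simp [hsdef, hxj, htx]⟩
            simp [hhdef, hzj, hzr]
      rcases hfac s h hsOD hhOD hds hdh hcomp with hc | hc
      · rw [eq_idOn_dom_iff] at hc
        have := hc j2 (hds ▸ hj2X)
        simp only [hsdef, if_neg hj2ne] at this
        exact hj2m this
      · rw [eq_idOn_dom_iff] at hc
        have := hc j (hdh ▸ hjran)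
        simp only [hhdef, if_pos rfl, Option.some_inj] at this
        exact absurd this (ne_of_lt hyj)
  · rintro ⟨j, hjX, hfix, y, hty, hyj, hjm⟩
    constructor
    · intro heq
      have hjj : t j = some j := by
        conv_lhs => rw [heq]
        simp [idOn, hjX]
      rw [hty] at hjj
      exact absurd (Option.some_inj.mp hjj) (ne_of_lt hyj)
    · intro s h hs hh hds hdh hcomp
      have hfixsh : ∀ i ∈ dom t, i ≠ j → s i = some i ∧ h i = some i := by
        intro i hi hij
        have hti : (s i).bind h = some i := by
          have : comp h s i = t i := by rw [← hcomp]
          rw [show (s i).bind h = comp h s i from rfl, this]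
          exact hfix i hi hij
        cases hsi : s i with
        | none => rw [hsi] at hti; simp at hti
        | some z =>
          rw [hsi] at hti
          have hti : h z = some i := hti
          have hz1 := hs i z hsi
          have hz2 := hh z i hti
          have hzi : z = i := le_antisymm hz1 hz2
          rw [hzi] at hti
          exact ⟨by rw [hzi], hti⟩
      have hjs : j ∈ dom s := hds ▸ hjX
      obtain ⟨w, hsw⟩ := Option.isSome_iff_exists.mp (mem_dom_iff.mp hjs)
      have hwj : w ≤ j := hs j w hsw
      have hhw : h w = some y := by
        have : (s j).bind h = some y := by
          rw [show (s j).bind h = comp h s j from rfl, ← hcomp]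
          exact hty
        rw [hsw] at this
        simpa using this
      rcases eq_or_lt_of_le hwj with heqw | hltw
      · left
        rw [eq_idOn_dom_iff]
        intro x hx
        have hx' : x ∈ dom t := hds ▸ hx
        by_cases hxj : x = j
        · subst hxj
          rw [hsw, heqw]
        · exact (hfixsh x hx' hxj).1
      · right
        rw [eq_idOn_dom_iff]
        intro z hz
        rw [hdh, mem_ran_iff] at hz
        obtain ⟨x, hxz⟩ := hz
        have hxds : x ∈ dom s := mem_dom_of_eq_some hxz
        have hxdt : x ∈ dom t := hds ▸ hxds
        by_cases hxj : x = j
        · have hzw : z = w := by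
            rw [hxj] at hxz
            rw [hxz] at hsw
            exact Option.some_inj.mp hsw
          have hyw : y = w := by
            by_cases hwX : w ∈ dom t
            · have hwj' : w ≠ j := ne_of_lt hltw
              have hhww := (hfixsh w hwX hwj').2
              rw [hhw] at hhww
              exact Option.some_inj.mp hhww
            · have h1 : w ≤ jminus (dom t) j := le_jminus hwX hltw
              have h2 : y ≤ w := hh w y hhw
              exact le_antisymm h2 (h1.trans hjm)
          rw [hzw, hhw, hyw]
        · have hsxx := (hfixsh x hxdt hxj).1
          rw [hxz] at hsxx
          have hzx : z = x := Option.some_inj.mp hsxx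
          rw [hzx]
          exact (hfixsh x hxdt hxj).2
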